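/- arXiv:1808.04172 — 2 statements merged into one kernel-verified Lean document; each statement's English description precedes it below -/
import Mathlib

section
/- Let G be a combinatorial Gauss diagram and let G' be obtained from G by an arc-shift move involving two distinct chords c and d whose signs in G are ε(c) and ε(d). Then J(G') = J(G) − (ε(c) + ε(d)). -/
open scoped Classical

/-- The cyclically next position on a circle of `m` marked points. -/
def nextPos {m : ℕ} (p : Fin m) : Fin m :=
  ⟨(p.val + 1) % m, Nat.mod_lt _ p.pos⟩

/-- `Inside a b x` : the point `x` lies strictly inside the cyclic interval
running from `a` (forward) to `b`. -/
def Inside {m : ℕ} (a b x : Fin m) : Prop :=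
  0 < (x - a).val ∧ (x - a).val < (b - a).val

/-- A combinatorial Gauss diagram with `n` chords: a bijection assigning to each
chord its two endpoints among `2 * n` cyclically ordered points, together with a
sign function taking values in `{-1, 1}`. -/
structure GaussDiagram (n : ℕ) where
  endpoint : Fin n × Bool ≃ Fin (2 * n)
  sign : Fin n → ℤ
  sign_pm : ∀ c, sign c = 1 ∨ sign c = -1

/-- Two chords are interlinked if exactly one endpoint of `d` lies strictly inside
the cyclic interval from `endpoint (c, false)` to `endpoint (c, true)`. -/
def Interlinked {n : ℕ} (G : GaussDiagram n) (c d : Fin n) : Prop :=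
  Xor'
    (Inside (G.endpoint (c, false)) (G.endpoint (c, true)) (G.endpoint (d, false)))
    (Inside (G.endpoint (c, false)) (G.endpoint (c, true)) (G.endpoint (d, true)))

/-- A chord is odd if it is interlinked with an odd number of other chords. -/
def OddChord {n : ℕ} (G : GaussDiagram n) (c : Fin n) : Prop :=
  Odd ((Finset.univ.filter fun d => d ≠ c ∧ Interlinked G c d).card)

/-- The odd writhe: the sum of the signs of the odd chords. -/
noncomputable def oddWrithe {n : ℕ} (G : GaussDiagram n) : ℤ :=
  ∑ c ∈ Finset.univ.filter (fun c => OddChord G c), G.sign c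

/-- `AdjSwap G G' p c d` : `G'` is obtained from `G` by the adjacent endpoint swap at
the cyclically adjacent positions `p`, `p+1`, which are occupied by endpoints of the
two distinct chords `c` and `d`; all signs are unchanged. -/
def AdjSwap {n : ℕ} (G G' : GaussDiagram n) (p : Fin (2 * n)) (c d : Fin n) : Prop :=
  c ≠ d ∧ (G.endpoint.symm p).1 = c ∧ (G.endpoint.symm (nextPos p)).1 = d ∧
    G'.endpoint = G.endpoint.trans (Equiv.swap p (nextPos p)) ∧
    G'.sign = G.sign

/-- `ArcShift G G' p c d` : `G'` is obtained from `G` by the arc-shift move at the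
cyclically adjacent positions `p`, `p+1`, occupied by endpoints of the two distinct
chords `c` and `d`: the two endpoints are exchanged and the signs of `c` and `d`
are negated. -/
def ArcShift {n : ℕ} (G G' : GaussDiagram n) (p : Fin (2 * n)) (c d : Fin n) : Prop :=
  c ≠ d ∧ (G.endpoint.symm p).1 = c ∧ (G.endpoint.symm (nextPos p)).1 = d ∧
    G'.endpoint = G.endpoint.trans (Equiv.swap p (nextPos p)) ∧
    G'.sign = fun e => if e = c ∨ e = d then -G.sign e else G.sign e

/-- `SignFlip G G' c` : `G'` is obtained from `G` by negating the sign of the chord `c`,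
changing nothing else. -/
def SignFlip {n : ℕ} (G G' : GaussDiagram n) (c : Fin n) : Prop :=
  G'.endpoint = G.endpoint ∧ G'.sign = Function.update G.sign c (-G.sign c)

/-- An arc-shift move between Gauss diagrams (at some position, on some pair of chords). -/
def ArcShiftMove {n : ℕ} (G G' : GaussDiagram n) : Prop :=
  ∃ p c d, ArcShift G G' p c d

/-- A sign-flip move between Gauss diagrams (at some chord). -/
def SignFlipMove {n : ℕ} (G G' : GaussDiagram n) : Prop :=
  ∃ c, SignFlip G G' c

/-- A move is either an arc-shift move or a sign-flip move. -/
def Move {n : ℕ} (G G' : GaussDiagram n) : Prop :=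
  ArcShiftMove G G' ∨ SignFlipMove G G'

/-- A Gauss diagram is parallel if no two of its chords are interlinked. -/
def Parallel {n : ℕ} (G : GaussDiagram n) : Prop :=
  ∀ c d : Fin n, c ≠ d → ¬ Interlinked G c d


/-!
Swapping the endpoints at two adjacent positions `p`, `p + 1` reverses the cyclic order of
exactly those triples of positions that contain both `p` and `p + 1`. Hence the interlinking
of the two chords `c`, `d` owning these endpoints is toggled and every other interlinking is
unchanged, so `c` and `d` change parity and all other chords keep theirs. Since the move also
negates the signs of `c` and `d`, each of them changes its contribution to the odd writhe by
`-ε`: from `ε` to `0` if it was odd, from `0` to `-ε` if it was even.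
-/

open Finset

theorem inside_iff_val {m : ℕ} {a b x : Fin m} :
    Inside a b x ↔ (a.val < x.val ∧ x.val < b.val) ∨
      (b.val < a.val ∧ (a.val < x.val ∨ x.val < b.val)) := by
  have val_sub : ∀ y : Fin m,
      (y - a).val = if a ≤ y then y.val - a.val else m + y.val - a.val := by
    intro y
    split_ifs with h
    exacts [Fin.coe_sub_iff_le.mpr h, Fin.coe_sub_iff_lt.mpr (not_le.mp h)]
  simp only [Inside, val_sub, Fin.le_def]
  split_ifs <;> omega

theorem val_nextPos {m : ℕ} (p : Fin m) :
    (nextPos p).val = p.val + 1 ∨ (p.val + 1 = m ∧ (nextPos p).val = 0) := by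
  rcases Nat.lt_or_ge (p.val + 1) m with h | h
  · exact Or.inl (Nat.mod_eq_of_lt h)
  · have hm : p.val + 1 = m := by omega
    exact Or.inr ⟨hm, by simp [nextPos, hm]⟩

theorem inside_swap_nextPos_iff {m : ℕ} {p a b x : Fin m} (hab : a ≠ b) (hax : a ≠ x)
    (hbx : b ≠ x) :
    Inside (Equiv.swap p (nextPos p) a) (Equiv.swap p (nextPos p) b)
        (Equiv.swap p (nextPos p) x) ↔
      Xor (Inside a b x)
        (p ∈ ({a, b, x} : Set (Fin m)) ∧ nextPos p ∈ ({a, b, x} : Set (Fin m))) := by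
  have hq := val_nextPos p
  simp only [Equiv.swap_apply_def, Set.mem_insert_iff, Set.mem_singleton_iff, Fin.ext_iff,
    ne_eq, xor_def] at *
  split_ifs <;> simp only [inside_iff_val] <;> omega

theorem interlinked_iff_xor {n : ℕ} (G : GaussDiagram n) (e f : Fin n) :
    Interlinked G e f ↔
      Xor (Inside (G.endpoint (e, false)) (G.endpoint (e, true)) (G.endpoint (f, false)))
        (Inside (G.endpoint (e, false)) (G.endpoint (e, true)) (G.endpoint (f, true))) :=
  Iff.rfl

theorem interlinked_iff_of_endpoint_eq_swap {n : ℕ} {G G' : GaussDiagram n} {p : Fin (2 * n)}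
    {c d e f : Fin n} (hE : G'.endpoint = G.endpoint.trans (Equiv.swap p (nextPos p)))
    (hc : (G.endpoint.symm p).1 = c) (hd : (G.endpoint.symm (nextPos p)).1 = d) (hcd : c ≠ d)
    (hef : e ≠ f) :
    Interlinked G' e f ↔ Xor (Interlinked G e f) (e = c ∧ f = d ∨ e = d ∧ f = c) := by
  have hne : ∀ β γ, G.endpoint (e, β) ≠ G.endpoint (f, γ) := fun β γ h =>
    hef (congrArg Prod.fst (G.endpoint.injective h))
  have hee : G.endpoint (e, false) ≠ G.endpoint (e, true) := fun h =>
    Bool.false_ne_true (congrArg Prod.snd (G.endpoint.injective h))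
  simp only [interlinked_iff_xor, hE, Equiv.trans_apply,
    inside_swap_nextPos_iff hee (hne _ _) (hne _ _)]
  obtain ⟨b₀, hp⟩ : ∃ b, G.endpoint (c, b) = p :=
    ⟨_, by rw [← hc, Equiv.apply_symm_apply]⟩
  obtain ⟨b₁, hq⟩ : ∃ b, G.endpoint (d, b) = nextPos p :=
    ⟨_, by rw [← hd, Equiv.apply_symm_apply]⟩
  rw [← hq, ← hp]
  simp only [Set.mem_insert_iff, Set.mem_singleton_iff, G.endpoint.injective.eq_iff,
    Prod.mk.injEq]
  cases b₀ <;> cases b₁ <;> grind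

theorem odd_card_filter_iff_not_of_xor {α : Type*} [Fintype α] {P Q : α → Prop}
    [DecidablePred P] [DecidablePred Q] (t : α) (h : ∀ f, Q f ↔ Xor (P f) (f = t)) :
    Odd #(univ.filter Q) ↔ ¬ Odd #(univ.filter P) := by
  by_cases ht : P t
  · have hQ : univ.filter Q = (univ.filter P).erase t := by
      ext f; by_cases hf : f = t <;> simp_all [xor_def]
    have hpos : 0 < #(univ.filter P) := card_pos.mpr ⟨t, by simpa using ht⟩
    rw [hQ, card_erase_of_mem (by simpa using ht), Nat.odd_iff, Nat.odd_iff]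
    omega
  · have hQ : univ.filter Q = insert t (univ.filter P) := by
      ext f; by_cases hf : f = t <;> simp_all [xor_def]
    rw [hQ, card_insert_of_notMem (by simpa using ht), Nat.odd_add_one]

theorem oddChord_iff_of_endpoint_eq_swap {n : ℕ} {G G' : GaussDiagram n} {p : Fin (2 * n)}
    {c d : Fin n} (hE : G'.endpoint = G.endpoint.trans (Equiv.swap p (nextPos p)))
    (hc : (G.endpoint.symm p).1 = c) (hd : (G.endpoint.symm (nextPos p)).1 = d) (hcd : c ≠ d)
    (e : Fin n) :
    OddChord G' e ↔ Xor (OddChord G e) (e = c ∨ e = d) := by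
  have hlink : ∀ f, (f ≠ e ∧ Interlinked G' e f) ↔
      Xor (f ≠ e ∧ Interlinked G e f) (e = c ∧ f = d ∨ e = d ∧ f = c) := by
    intro f
    by_cases hfe : f = e
    · subst hfe; grind
    · simp only [ne_eq, hfe, not_false_eq_true, true_and,
        interlinked_iff_of_endpoint_eq_swap hE hc hd hcd (Ne.symm hfe)]
  unfold OddChord
  by_cases hecd : e = c ∨ e = d
  · rw [eq_true hecd, xor_comm, xor_true]
    rcases hecd with rfl | rfl
    · exact odd_card_filter_iff_not_of_xor d fun f => by rw [hlink]; grind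
    · exact odd_card_filter_iff_not_of_xor c fun f => by rw [hlink]; grind
  · have hsame : ∀ f, (f ≠ e ∧ Interlinked G' e f) ↔ (f ≠ e ∧ Interlinked G e f) :=
      fun f => by rw [hlink]; grind
    simp only [hsame, hecd, xor_def, and_true, not_false_eq_true, false_and, or_false]

theorem ite_xor_neg_sub {Q r : Prop} [Decidable Q] [Decidable r] (s : ℤ) :
    (if Xor Q r then (if r then -s else s) else 0) =
      (if Q then s else 0) - (if r then s else 0) := by
  by_cases Q <;> by_cases r <;> simp_all [xor_def]

theorem arcShift_oddWrithe_general {n : ℕ} (G G' : GaussDiagram n)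
    (p : Fin (2 * n)) (c d : Fin n) (h : ArcShift G G' p c d) :
    oddWrithe G' = oddWrithe G - (G.sign c + G.sign d) := by
  obtain ⟨hcd, hc, hd, hE, hs⟩ := h
  have hodd := oddChord_iff_of_endpoint_eq_swap hE hc hd hcd
  calc oddWrithe G'
      = ∑ e, ((if OddChord G e then G.sign e else 0) -
          if e ∈ ({c, d} : Finset (Fin n)) then G.sign e else 0) := by
        simp only [oddWrithe, sum_filter, hs, hodd, mem_insert, mem_singleton, ite_xor_neg_sub]
    _ = oddWrithe G - (G.sign c + G.sign d) := by
        rw [sum_sub_distrib, ← sum_filter, ← sum_filter, filter_mem_eq_inter, univ_inter,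
          sum_pair hcd]
        rfl

/-- an arc-shift move involving the two distinct chords `c` and `d` changes
the odd writhe by `-(ε(c) + ε(d))`. -/
theorem arcShift_oddWrithe {n : ℕ} (hn : 1 ≤ n) (G G' : GaussDiagram n)
    (p : Fin (2 * n)) (c d : Fin n) (h : ArcShift G G' p c d) :
    oddWrithe G' = oddWrithe G - (G.sign c + G.sign d) :=
  arcShift_oddWrithe_general G G' p c d h
end

section
/- Let G be a combinatorial Gauss diagram with n chords in which three cyclically consecutive positions p, p+1, p+2 (mod 2n) are occupied by endpoints of three pairwise distinct chords. Let G' be the Gauss diagram obtained from G by reversing the order of these three endpoints (i.e., exchanging the endpoints at positions p and p+2) while keeping all signs unchanged. Then G' can be obtained from G by a sequence of exactly three arc-shift moves (the Gauss-diagram form of the statement that a Reidemeister move R₃ is realized by three arc shift moves; each of the three chords has its sign negated twice, so all signs are restored). -/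
open scoped Classical

/-! Write `c, d, e` for the chords at `p, p+1, p+2`. Arc shifts at `p`, at `p+1` and at `p` again
turn the order `c d e` into `d c e`, `d e c`, `e d c`: on positions this is the identity
`(p p+1)(p+1 p+2)(p p+1) = (p p+2)`, and each of `c, d, e` has its sign negated exactly twice. -/

namespace GaussDiagram

variable {n : ℕ}

theorem ext {G H : GaussDiagram n} (hE : G.endpoint = H.endpoint) (hs : G.sign = H.sign) :
    G = H := by
  cases G; cases H; cases hE; cases hs; rfl

def chordAt (G : GaussDiagram n) (q : Fin (2 * n)) : Fin n :=
  (G.endpoint.symm q).1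

/-- The result of the arc-shift move at positions `p`, `p+1`, whether or not it is legal. -/
noncomputable def arcShiftAt (G : GaussDiagram n) (p : Fin (2 * n)) : GaussDiagram n where
  endpoint := G.endpoint.trans (Equiv.swap p (nextPos p))
  sign e := if e = G.chordAt p ∨ e = G.chordAt (nextPos p) then -G.sign e else G.sign e
  sign_pm e := by
    split_ifs
    · rcases G.sign_pm e with h | h <;> simp [h]
    · exact G.sign_pm e

variable (G : GaussDiagram n) (p : Fin (2 * n))

theorem arcShift_arcShiftAt (h : G.chordAt p ≠ G.chordAt (nextPos p)) :
    ArcShift G (G.arcShiftAt p) p (G.chordAt p) (G.chordAt (nextPos p)) :=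
  ⟨h, rfl, rfl, rfl, rfl⟩

theorem chordAt_arcShiftAt_self : (G.arcShiftAt p).chordAt p = G.chordAt (nextPos p) := by
  simp [chordAt, arcShiftAt]

theorem chordAt_arcShiftAt_nextPos : (G.arcShiftAt p).chordAt (nextPos p) = G.chordAt p := by
  simp [chordAt, arcShiftAt]

theorem chordAt_arcShiftAt_of_ne {q : Fin (2 * n)} (hp : q ≠ p) (hq : q ≠ nextPos p) :
    (G.arcShiftAt p).chordAt q = G.chordAt q := by
  simp [chordAt, arcShiftAt, Equiv.swap_apply_of_ne_of_ne hp hq]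

theorem sign_arcShiftAt (e : Fin n) :
    (G.arcShiftAt p).sign e =
      if e = G.chordAt p ∨ e = G.chordAt (nextPos p) then -G.sign e else G.sign e :=
  rfl

theorem endpoint_arcShiftAt_nextPos_arcShiftAt (hp : nextPos (nextPos p) ≠ p)
    (hq : nextPos (nextPos p) ≠ nextPos p) :
    (((G.arcShiftAt p).arcShiftAt (nextPos p)).arcShiftAt p).endpoint =
      G.endpoint.trans (Equiv.swap p (nextPos (nextPos p))) := by
  have h := Equiv.swap_mul_swap_mul_swap hq hp
  rw [Equiv.swap_comm (nextPos p) p, Equiv.swap_comm (nextPos (nextPos p)) (nextPos p)] at h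
  rw [← h]
  rfl

theorem sign_arcShiftAt_nextPos_arcShiftAt (hcd : G.chordAt p ≠ G.chordAt (nextPos p))
    (hce : G.chordAt p ≠ G.chordAt (nextPos (nextPos p)))
    (hde : G.chordAt (nextPos p) ≠ G.chordAt (nextPos (nextPos p))) :
    (((G.arcShiftAt p).arcShiftAt (nextPos p)).arcShiftAt p).sign = G.sign := by
  have hp := ne_of_apply_ne G.chordAt hce
  have hq := ne_of_apply_ne G.chordAt hde
  funext x
  simp only [sign_arcShiftAt, chordAt_arcShiftAt_self, chordAt_arcShiftAt_nextPos,
    chordAt_arcShiftAt_of_ne _ _ hp.symm hq.symm,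
    chordAt_arcShiftAt_of_ne _ _ (ne_of_apply_ne G.chordAt hcd) hp]
  grind

end GaussDiagram

open GaussDiagram

theorem r3_via_three_arcShifts_general {n : ℕ} (G G' : GaussDiagram n)
    (p : Fin (2 * n))
    (hcd : (G.endpoint.symm p).1 ≠ (G.endpoint.symm (nextPos p)).1)
    (hce : (G.endpoint.symm p).1 ≠ (G.endpoint.symm (nextPos (nextPos p))).1)
    (hde : (G.endpoint.symm (nextPos p)).1 ≠ (G.endpoint.symm (nextPos (nextPos p))).1)
    (hE : G'.endpoint = G.endpoint.trans (Equiv.swap p (nextPos (nextPos p))))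
    (hsign : G'.sign = G.sign) :
    ∃ G₁ G₂ : GaussDiagram n,
      (∃ p₁ c d, ArcShift G G₁ p₁ c d) ∧
      (∃ p₂ c d, ArcShift G₁ G₂ p₂ c d) ∧
      (∃ p₃ c d, ArcShift G₂ G' p₃ c d) := by
  change G.chordAt p ≠ G.chordAt (nextPos p) at hcd
  change G.chordAt p ≠ G.chordAt (nextPos (nextPos p)) at hce
  change G.chordAt (nextPos p) ≠ G.chordAt (nextPos (nextPos p)) at hde
  have hp : nextPos (nextPos p) ≠ p := (ne_of_apply_ne G.chordAt hce).symm
  have hq : nextPos (nextPos p) ≠ nextPos p := (ne_of_apply_ne G.chordAt hde).symm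
  have hpq : p ≠ nextPos p := ne_of_apply_ne G.chordAt hcd
  have hG' : G' = ((G.arcShiftAt p).arcShiftAt (nextPos p)).arcShiftAt p :=
    ext (hE.trans (G.endpoint_arcShiftAt_nextPos_arcShiftAt p hp hq).symm)
      (hsign.trans (G.sign_arcShiftAt_nextPos_arcShiftAt p hcd hce hde).symm)
  rw [hG']
  refine ⟨_, _, ⟨_, _, _, arcShift_arcShiftAt _ _ hcd⟩, ⟨_, _, _, arcShift_arcShiftAt _ _ ?_⟩,
    ⟨_, _, _, arcShift_arcShiftAt _ _ ?_⟩⟩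
  · rwa [chordAt_arcShiftAt_nextPos, chordAt_arcShiftAt_of_ne _ _ hp hq]
  · rwa [chordAt_arcShiftAt_self, chordAt_arcShiftAt_of_ne _ _ hp hq,
      chordAt_arcShiftAt_of_ne _ _ hpq hp.symm, chordAt_arcShiftAt_self]

/-- if three cyclically consecutive positions `p`, `p+1`, `p+2` are occupied
by endpoints of three pairwise distinct chords, then the Gauss diagram obtained by
exchanging the endpoints at positions `p` and `p+2` (keeping all signs unchanged) can be
obtained by a sequence of exactly three arc-shift moves. -/
theorem r3_via_three_arcShifts {n : ℕ} (hn : 1 ≤ n) (G G' : GaussDiagram n)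
    (p : Fin (2 * n))
    (hcd : (G.endpoint.symm p).1 ≠ (G.endpoint.symm (nextPos p)).1)
    (hce : (G.endpoint.symm p).1 ≠ (G.endpoint.symm (nextPos (nextPos p))).1)
    (hde : (G.endpoint.symm (nextPos p)).1 ≠ (G.endpoint.symm (nextPos (nextPos p))).1)
    (hE : G'.endpoint = G.endpoint.trans (Equiv.swap p (nextPos (nextPos p))))
    (hsign : G'.sign = G.sign) :
    ∃ G₁ G₂ : GaussDiagram n,
      (∃ p₁ c d, ArcShift G G₁ p₁ c d) ∧
      (∃ p₂ c d, ArcShift G₁ G₂ p₂ c d) ∧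
      (∃ p₃ c d, ArcShift G₂ G' p₃ c d) :=
  r3_via_three_arcShifts_general G G' p hcd hce hde hE hsign
end
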